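/- arXiv:2504.14829 — 2 statements merged into one kernel-verified Lean document; each statement's English description precedes it below -/
import Mathlib

section
/- Let R = R_1 × R_2 be a direct product of rings and let I = I_1 × I_2 be an M-ideal of R. If both I_1 and I_2 are nonzero, then I is an essential ideal of R. -/
/-- An ideal `J` is an M-ideal if for all nonzero ideals `I₁, I₂` with nonzero
intersection, `J ⊓ I₁ ≠ ⊥` and `J ⊓ I₂ ≠ ⊥` imply `J ⊓ (I₁ ⊓ I₂) ≠ ⊥`. -/
def IsMIdeal {S : Type*} [NonUnitalNonAssocRing S] (J : TwoSidedIdeal S) : Prop :=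
  ∀ I₁ I₂ : TwoSidedIdeal S, I₁ ≠ ⊥ → I₂ ≠ ⊥ → I₁ ⊓ I₂ ≠ ⊥ →
    J ⊓ I₁ ≠ ⊥ → J ⊓ I₂ ≠ ⊥ → J ⊓ (I₁ ⊓ I₂) ≠ ⊥

/-- An ideal `J` is essential if it intersects every nonzero ideal nontrivially. -/
def IsEssentialIdeal {S : Type*} [NonUnitalNonAssocRing S] (J : TwoSidedIdeal S) : Prop :=
  ∀ I : TwoSidedIdeal S, I ≠ ⊥ → J ⊓ I ≠ ⊥

/-- An ideal `I` is relatively irreducible if any two ideals contained in `I` with zero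
intersection cannot both be nonzero. -/
def IsRelIrreducible {S : Type*} [NonUnitalNonAssocRing S] (I : TwoSidedIdeal S) : Prop :=
  ∀ J K : TwoSidedIdeal S, J ≤ I → K ≤ I → J ⊓ K = ⊥ → J = ⊥ ∨ K = ⊥

/-- A minimal ideal: nonzero, and its only subideals are `⊥` and itself. -/
def IsMinimalIdeal {S : Type*} [NonUnitalNonAssocRing S] (I : TwoSidedIdeal S) : Prop :=
  I ≠ ⊥ ∧ ∀ J : TwoSidedIdeal S, J ≤ I → J = ⊥ ∨ J = I

/-- The product ideal I₁ × I₂ in R₁ × R₂. -/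
def prodTSI {R₁ R₂ : Type*} [Ring R₁] [Ring R₂]
    (I₁ : TwoSidedIdeal R₁) (I₂ : TwoSidedIdeal R₂) : TwoSidedIdeal (R₁ × R₂) :=
  TwoSidedIdeal.comap (RingHom.fst R₁ R₂) I₁ ⊓ TwoSidedIdeal.comap (RingHom.snd R₁ R₂) I₂

lemma tsi_ne_bot {S : Type*} [NonUnitalNonAssocRing S] {J : TwoSidedIdeal S} :
    J ≠ ⊥ ↔ ∃ x ∈ J, x ≠ 0 := by
  constructor
  · intro h
    by_contra hc
    push_neg at hc
    exact h (le_antisymm (fun x hx => hc x hx)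
      (fun x hx => by rw [show x = 0 from hx]; exact J.zero_mem))
  · rintro ⟨x, hx, hx0⟩ h
    rw [h] at hx
    exact hx0 hx

lemma mem_prodTSI {R₁ R₂ : Type*} [Ring R₁] [Ring R₂]
    {I₁ : TwoSidedIdeal R₁} {I₂ : TwoSidedIdeal R₂} {x : R₁ × R₂} :
    x ∈ prodTSI I₁ I₂ ↔ x.1 ∈ I₁ ∧ x.2 ∈ I₂ :=
  Iff.rfl

/-- The non-unital ring hom `x ↦ (x, 0)`. -/
def inlHom (R₁ R₂ : Type*) [Ring R₁] [Ring R₂] : R₁ →ₙ+* R₁ × R₂ where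
  toFun x := (x, 0)
  map_mul' x y := by simp [Prod.ext_iff]
  map_zero' := rfl
  map_add' x y := by simp [Prod.ext_iff]

/-- The non-unital ring hom `x ↦ (0, x)`. -/
def inrHom (R₁ R₂ : Type*) [Ring R₁] [Ring R₂] : R₂ →ₙ+* R₁ × R₂ where
  toFun x := (0, x)
  map_mul' x y := by simp [Prod.ext_iff]
  map_zero' := rfl
  map_add' x y := by simp [Prod.ext_iff]

/-- If I₁ × I₂ is an M-ideal of R₁ × R₂ with I₁ and I₂ both nonzero, then it is an
essential ideal of R₁ × R₂. -/
theorem stmt14 {R₁ R₂ : Type*} [Ring R₁] [Ring R₂]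
    (I₁ : TwoSidedIdeal R₁) (I₂ : TwoSidedIdeal R₂) (h₁ : I₁ ≠ ⊥) (h₂ : I₂ ≠ ⊥)
    (hM : IsMIdeal (prodTSI I₁ I₂)) : IsEssentialIdeal (prodTSI I₁ I₂) := by
  obtain ⟨x₁, hx₁, hx₁0⟩ := tsi_ne_bot.mp h₁
  obtain ⟨x₂, hx₂, hx₂0⟩ := tsi_ne_bot.mp h₂
  intro K hK
  obtain ⟨⟨a, b⟩, hab, hab0⟩ := tsi_ne_bot.mp hK
  rcases (by by_contra hc; push_neg at hc; exact hab0 (Prod.ext hc.1 hc.2) :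
      a ≠ 0 ∨ b ≠ 0) with ha | hb
  · -- a ≠ 0 case
    have ha0K : (a, 0) ∈ K := by
      have := K.mul_mem_left (1, 0) (a, b) hab
      simpa using this
    set K₁ := K.comap (inlHom R₁ R₂) with hK₁def
    have haK₁ : a ∈ K₁ := (TwoSidedIdeal.mem_comap _).mpr ha0K
    set A := prodTSI K₁ (⊤ : TwoSidedIdeal R₂) with hAdef
    set B := prodTSI (⊤ : TwoSidedIdeal R₁) (⊥ : TwoSidedIdeal R₂) with hBdef
    have hAne : A ≠ ⊥ := tsi_ne_bot.mpr ⟨(a, 0), mem_prodTSI.mpr ⟨haK₁, trivial⟩,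
      by simp [Prod.ext_iff, ha]⟩
    have hBne : B ≠ ⊥ := tsi_ne_bot.mpr ⟨(x₁, 0),
      mem_prodTSI.mpr ⟨trivial, rfl⟩,
      by simp [Prod.ext_iff, hx₁0]⟩
    have hABne : A ⊓ B ≠ ⊥ := tsi_ne_bot.mpr ⟨(a, 0),
      ⟨mem_prodTSI.mpr ⟨haK₁, trivial⟩,
        mem_prodTSI.mpr ⟨trivial, rfl⟩⟩,
      by simp [Prod.ext_iff, ha]⟩
    have hIA : prodTSI I₁ I₂ ⊓ A ≠ ⊥ := tsi_ne_bot.mpr ⟨(0, x₂),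
      ⟨mem_prodTSI.mpr ⟨I₁.zero_mem, hx₂⟩,
        mem_prodTSI.mpr ⟨K₁.zero_mem, trivial⟩⟩,
      by simp [Prod.ext_iff, hx₂0]⟩
    have hIB : prodTSI I₁ I₂ ⊓ B ≠ ⊥ := tsi_ne_bot.mpr ⟨(x₁, 0),
      ⟨mem_prodTSI.mpr ⟨hx₁, I₂.zero_mem⟩,
        mem_prodTSI.mpr ⟨trivial, rfl⟩⟩,
      by simp [Prod.ext_iff, hx₁0]⟩
    obtain ⟨⟨u, v⟩, huv, huv0⟩ := tsi_ne_bot.mp (hM A B hAne hBne hABne hIA hIB)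
    obtain ⟨hI, hAB⟩ := huv
    obtain ⟨hA', hB'⟩ := hAB
    obtain ⟨huI, hvI⟩ := mem_prodTSI.mp hI
    obtain ⟨huK₁, -⟩ := mem_prodTSI.mp hA'
    obtain ⟨-, hvbot⟩ := mem_prodTSI.mp hB'
    have hv0 : v = 0 := hvbot
    have hu0 : u ≠ 0 := fun h => huv0 (by simp [Prod.ext_iff, h, hv0])
    refine tsi_ne_bot.mpr ⟨(u, 0), ⟨mem_prodTSI.mpr ⟨huI, I₂.zero_mem⟩, ?_⟩, by simp [Prod.ext_iff, hu0]⟩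
    exact (TwoSidedIdeal.mem_comap _).mp huK₁
  · -- b ≠ 0 case
    have h0bK : (0, b) ∈ K := by
      have := K.mul_mem_left (0, 1) (a, b) hab
      simpa using this
    set K₂ := K.comap (inrHom R₁ R₂) with hK₂def
    have hbK₂ : b ∈ K₂ := (TwoSidedIdeal.mem_comap _).mpr h0bK
    set A := prodTSI (⊤ : TwoSidedIdeal R₁) K₂ with hAdef
    set B := prodTSI (⊥ : TwoSidedIdeal R₁) (⊤ : TwoSidedIdeal R₂) with hBdef
    have hAne : A ≠ ⊥ := tsi_ne_bot.mpr ⟨(0, b), mem_prodTSI.mpr ⟨trivial, hbK₂⟩,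
      by simp [Prod.ext_iff, hb]⟩
    have hBne : B ≠ ⊥ := tsi_ne_bot.mpr ⟨(0, x₂),
      mem_prodTSI.mpr ⟨rfl, trivial⟩,
      by simp [Prod.ext_iff, hx₂0]⟩
    have hABne : A ⊓ B ≠ ⊥ := tsi_ne_bot.mpr ⟨(0, b),
      ⟨mem_prodTSI.mpr ⟨trivial, hbK₂⟩,
        mem_prodTSI.mpr ⟨rfl, trivial⟩⟩,
      by simp [Prod.ext_iff, hb]⟩
    have hIA : prodTSI I₁ I₂ ⊓ A ≠ ⊥ := tsi_ne_bot.mpr ⟨(x₁, 0),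
      ⟨mem_prodTSI.mpr ⟨hx₁, I₂.zero_mem⟩,
        mem_prodTSI.mpr ⟨trivial, K₂.zero_mem⟩⟩,
      by simp [Prod.ext_iff, hx₁0]⟩
    have hIB : prodTSI I₁ I₂ ⊓ B ≠ ⊥ := tsi_ne_bot.mpr ⟨(0, x₂),
      ⟨mem_prodTSI.mpr ⟨I₁.zero_mem, hx₂⟩,
        mem_prodTSI.mpr ⟨rfl, trivial⟩⟩,
      by simp [Prod.ext_iff, hx₂0]⟩
    obtain ⟨⟨u, v⟩, huv, huv0⟩ := tsi_ne_bot.mp (hM A B hAne hBne hABne hIA hIB)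
    obtain ⟨hI, hAB⟩ := huv
    obtain ⟨hA', hB'⟩ := hAB
    obtain ⟨huI, hvI⟩ := mem_prodTSI.mp hI
    obtain ⟨-, hvK₂⟩ := mem_prodTSI.mp hA'
    obtain ⟨hubot, -⟩ := mem_prodTSI.mp hB'
    have hu0 : u = 0 := hubot
    have hv0 : v ≠ 0 := fun h => huv0 (by simp [Prod.ext_iff, h, hu0])
    refine tsi_ne_bot.mpr ⟨(0, v), ⟨mem_prodTSI.mpr ⟨I₁.zero_mem, hvI⟩, ?_⟩, by simp [Prod.ext_iff, hv0]⟩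
    exact (TwoSidedIdeal.mem_comap _).mp hvK₂
end

section
/- Every nonzero ideal of the ring T_n of n×n upper triangular matrices over a field contains the matrix unit e_{1n}; consequently, every nonzero ideal of T_n is essential, and hence every ideal of T_n is an M-ideal. -/
/-- The subring of upper triangular n×n matrices over F. -/
def upperTriangularSubring (F : Type*) [Field F] (n : ℕ) :
    Subring (Matrix (Fin n) (Fin n) F) where
  carrier := {M | ∀ i j : Fin n, (j : ℕ) < (i : ℕ) → M i j = 0}
  zero_mem' := by intro i j _; simp
  one_mem' := by
    intro i j h
    exact Matrix.one_apply_ne (by rintro rfl; omega)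
  add_mem' := by intro a b ha hb i j h; simp [Matrix.add_apply, ha i j h, hb i j h]
  neg_mem' := by intro a ha i j h; simp [Matrix.neg_apply, ha i j h]
  mul_mem' := by
    intro a b ha hb i j h
    show (a * b) i j = 0
    rw [Matrix.mul_apply]
    apply Finset.sum_eq_zero
    intro x _
    rcases lt_or_ge (x : ℕ) (i : ℕ) with hx | hx
    · rw [ha i x hx, zero_mul]
    · rw [hb x j (lt_of_lt_of_le h hx), mul_zero]

/-- The matrix unit e₁ₙ lies in the upper triangular matrices. -/
theorem e1n_mem (F : Type*) [Field F] (n : ℕ) (hn : 1 ≤ n) :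
    Matrix.single (⟨0, by omega⟩ : Fin n) (⟨n - 1, by omega⟩ : Fin n) (1 : F) ∈
      upperTriangularSubring F n := by
  intro i j h
  simp only [Matrix.single, Matrix.of_apply, ite_eq_right_iff, and_imp]
  rintro rfl rfl
  simp at h


lemma tsi_ne_bot_iff {S : Type*} [NonUnitalNonAssocRing S] {J : TwoSidedIdeal S} :
    J ≠ ⊥ ↔ ∃ x ∈ J, x ≠ (0 : S) := by
  constructor
  · intro h
    by_contra hc
    push_neg at hc
    apply h
    apply le_antisymm _ bot_le
    intro x hx
    rw [TwoSidedIdeal.mem_bot S]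
    exact hc x hx
  · rintro ⟨x, hx, hx0⟩ rfl
    exact hx0 ((TwoSidedIdeal.mem_bot S).1 hx)

lemma e1n_mem_of_ne_bot (F : Type*) [Field F] (n : ℕ) (hn : 1 ≤ n)
    (J : TwoSidedIdeal (upperTriangularSubring F n)) (hJ : J ≠ ⊥) :
    (⟨Matrix.single ⟨0, by omega⟩ ⟨n - 1, by omega⟩ (1 : F), e1n_mem F n hn⟩ :
        upperTriangularSubring F n) ∈ J := by
  obtain ⟨x, hxJ, hx0⟩ := tsi_ne_bot_iff.1 hJ
  have hxv : (x : Matrix (Fin n) (Fin n) F) ≠ 0 := fun h => hx0 (Subtype.ext h)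
  obtain ⟨i, j, hij⟩ : ∃ i j, (x : Matrix (Fin n) (Fin n) F) i j ≠ 0 := by
    by_contra hc
    push_neg at hc
    exact hxv (by ext a b; simp [hc])
  set M : Matrix (Fin n) (Fin n) F := (x : Matrix (Fin n) (Fin n) F)
  set c : F := (M i j)⁻¹
  have hA : Matrix.single (⟨0, by omega⟩ : Fin n) i c ∈ upperTriangularSubring F n := by
    intro a b hab
    apply Matrix.single_apply_of_ne
    rintro ⟨rfl, rfl⟩
    simp at hab
  have hB : Matrix.single j (⟨n - 1, by omega⟩ : Fin n) (1 : F) ∈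
      upperTriangularSubring F n := by
    intro a b hab
    apply Matrix.single_apply_of_ne
    rintro ⟨rfl, rfl⟩
    simp only at hab
    omega
  have key : (⟨_, hA⟩ : upperTriangularSubring F n) * x * ⟨_, hB⟩ =
      ⟨Matrix.single ⟨0, by omega⟩ ⟨n - 1, by omega⟩ (1 : F), e1n_mem F n hn⟩ := by
    apply Subtype.ext
    show Matrix.single _ i c * M * Matrix.single j _ (1 : F) = _
    ext a b
    show _ = Matrix.single (⟨0, by omega⟩ : Fin n) (⟨n - 1, by omega⟩ : Fin n) (1 : F) a b
    by_cases hb : b = (⟨n - 1, by omega⟩ : Fin n)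
    · subst hb
      rw [Matrix.mul_single_apply_same]
      by_cases ha : a = (⟨0, by omega⟩ : Fin n)
      · subst ha
        rw [Matrix.single_mul_apply_same, Matrix.single_apply_same,
          mul_one, inv_mul_cancel₀ hij]
      · rw [Matrix.single_mul_apply_of_ne _ _ _ _ _ ha, zero_mul,
          Matrix.single_apply_of_row_ne (Ne.symm ha)]
    · rw [Matrix.mul_single_apply_of_ne _ _ _ _ _ hb,
        Matrix.single_apply_of_col_ne _ _ (Ne.symm hb)]
  rw [← key]
  exact J.mul_mem_right _ _ (J.mul_mem_left _ _ hxJ)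

/-- Every nonzero ideal of the upper triangular matrices Tₙ contains e₁ₙ; consequently
every nonzero ideal of Tₙ is essential, and every ideal of Tₙ is an M-ideal. -/
theorem stmt17 (F : Type*) [Field F] (n : ℕ) (hn : 1 ≤ n) :
    (∀ J : TwoSidedIdeal (upperTriangularSubring F n), J ≠ ⊥ →
      (⟨Matrix.single ⟨0, by omega⟩ ⟨n - 1, by omega⟩ (1 : F), e1n_mem F n hn⟩ :
        upperTriangularSubring F n) ∈ J) ∧
    (∀ J : TwoSidedIdeal (upperTriangularSubring F n), J ≠ ⊥ → IsEssentialIdeal J) ∧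
    (∀ J : TwoSidedIdeal (upperTriangularSubring F n), IsMIdeal J) := by
  have e1n_ne : (⟨Matrix.single ⟨0, by omega⟩ ⟨n - 1, by omega⟩ (1 : F),
      e1n_mem F n hn⟩ : upperTriangularSubring F n) ≠ 0 := by
    intro h
    have := congrFun (congrFun (congrArg Subtype.val h) ⟨0, by omega⟩) ⟨n - 1, by omega⟩
    simp at this
  have ess : ∀ J : TwoSidedIdeal (upperTriangularSubring F n), J ≠ ⊥ → IsEssentialIdeal J := by
    intro J hJ I hI
    apply tsi_ne_bot_iff.2
    exact ⟨_, (TwoSidedIdeal.mem_inf _).2 ⟨e1n_mem_of_ne_bot F n hn J hJ,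
      e1n_mem_of_ne_bot F n hn I hI⟩, e1n_ne⟩
  refine ⟨e1n_mem_of_ne_bot F n hn, ess, ?_⟩
  intro J I₁ I₂ _ _ h12 hJ1 _
  have hJ : J ≠ ⊥ := by
    rintro rfl
    exact hJ1 (le_antisymm inf_le_left bot_le)
  exact ess J hJ (I₁ ⊓ I₂) h12
end
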